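/- Let T ≥ 1, K ≥ 1, σ > 0, let f : {1,…,K} → ℝ, let c : {1,…,K} → ℝ with c_k > 0 for all k, and let (β_t)_{t=1}^T be a nondecreasing sequence of positive reals. For each round t let μ_{t-1}, s_{t-1} : {1,…,K} → ℝ with 0 ≤ s_{t-1}(k) ≤ 1 for all k, assume the confidence bounds |f(k) − μ_{t-1}(k)| ≤ √(β_t/c_k) · s_{t-1}(k) hold for all t ∈ {1,…,T} and all k, and let a_t be an arm maximizing k ↦ μ_{t-1}(k) + √(β_t/c_k) · s_{t-1}(k). Let a* be an arm maximizing f. Then min_{1 ≤ t ≤ T} (f(a*) − f(a_t)) ≤ √( Ĩ(T) / ∑_{t=1}^{T} c_{a_t} ), where Ĩ(T) = (4 β_T / log(1 + σ^{-2})) · ∑_{t=1}^{T} log(1 + σ^{-2} s_{t-1}(a_t)²). -/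

import Mathlib

/-!
Optimism makes the regret of round `t` at most twice the confidence width
`√(β_t / c_{a_t}) s_{t-1}(a_t)` of the chosen arm. Weighting the squared width by the cost
cancels `c_{a_t}`, leaving `4 β_t s²`, and concavity of `log` gives
`s² ≤ log (1 + σ⁻² s²) / log (1 + σ⁻²)` for `s ∈ [0, 1]`. Hence, for the minimal regret `r`,
`c_{a_t} r²` is at most the `t`-th summand of `Ĩ(T)`; summing over the rounds concludes.
-/

open Real Finset

lemma sub_le_two_mul_of_abs_sub_le {ι : Type*} {f μ w : ι → ℝ} {i j : ι}
    (hconf : ∀ k, |f k - μ k| ≤ w k) (hj : μ i + w i ≤ μ j + w j) :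
    f i - f j ≤ 2 * w j := by
  linarith [(abs_le.mp (hconf i)).2, (abs_le.mp (hconf j)).1]

lemma mul_log_one_add_le_log_one_add_mul {b x : ℝ} (hb : -1 < b) (hx₀ : 0 ≤ x) (hx₁ : x ≤ 1) :
    x * log (1 + b) ≤ log (1 + b * x) := by
  have hpos : 0 < 1 + b := by linarith
  calc x * log (1 + b) = log ((1 + b) ^ x) := (log_rpow hpos x).symm
    _ ≤ log (1 + b * x) := by
      refine log_le_log (by positivity) ?_
      rw [mul_comm b]
      exact rpow_one_add_le_one_add_mul_self hb.le hx₀ hx₁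

lemma sq_le_log_one_add_mul_sq_div {b s : ℝ} (hb : 0 < b) (hs₀ : 0 ≤ s) (hs₁ : s ≤ 1) :
    s ^ 2 ≤ log (1 + b * s ^ 2) / log (1 + b) := by
  rw [le_div_iff₀ (log_pos (by linarith))]
  exact mul_log_one_add_le_log_one_add_mul (by linarith) (sq_nonneg s) (pow_le_one₀ hs₀ hs₁)

lemma mul_sq_sqrt_div_mul {β c x : ℝ} (hβ : 0 ≤ β) (hc : 0 < c) :
    c * (sqrt (β / c) * x) ^ 2 = β * x ^ 2 := by
  rw [mul_pow, sq_sqrt (div_nonneg hβ hc.le)]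
  field_simp

lemma inf'_le_sqrt_sum_div_sum {ι : Type*} {S : Finset ι} (hS : S.Nonempty) {g w c B : ι → ℝ}
    (hc : ∀ t ∈ S, 0 < c t) (hgw : ∀ t ∈ S, g t ≤ w t) (hwB : ∀ t ∈ S, c t * w t ^ 2 ≤ B t) :
    S.inf' hS g ≤ sqrt ((∑ t ∈ S, B t) / ∑ t ∈ S, c t) := by
  set r := S.inf' hS g
  rcases le_or_gt r 0 with hr | hr
  · exact hr.trans (sqrt_nonneg _)
  have hround : ∀ t ∈ S, r ^ 2 * c t ≤ B t := fun t ht =>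
    calc r ^ 2 * c t ≤ w t ^ 2 * c t := by
          gcongr
          · exact (hc t ht).le
          · exact (inf'_le g ht).trans (hgw t ht)
      _ ≤ B t := by linarith [hwB t ht]
  have hsum : r ^ 2 * ∑ t ∈ S, c t ≤ ∑ t ∈ S, B t := by
    rw [mul_sum]
    exact sum_le_sum hround
  rw [← sqrt_sq hr.le]
  exact sqrt_le_sqrt ((le_div_iff₀ (sum_pos hc hS)).mpr hsum)

theorem cost_aware_gpucb_min_regret_general (T K : ℕ) (hT : 1 ≤ T)
    (σ : ℝ) (hσ : 0 < σ)
    (f c : Fin K → ℝ) (hc : ∀ k, 0 < c k)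
    (β : ℕ → ℝ) (hβpos : ∀ t ∈ Finset.Icc 1 T, 0 < β t) (hβmono : Monotone β)
    (μ s : ℕ → Fin K → ℝ)
    (hs : ∀ t ∈ Finset.Icc 1 T, ∀ k, 0 ≤ s t k ∧ s t k ≤ 1)
    (hconf : ∀ t ∈ Finset.Icc 1 T, ∀ k,
      |f k - μ t k| ≤ Real.sqrt (β t / c k) * s t k)
    (a : ℕ → Fin K)
    (ha : ∀ t ∈ Finset.Icc 1 T, ∀ k,
      μ t k + Real.sqrt (β t / c k) * s t k ≤
        μ t (a t) + Real.sqrt (β t / c (a t)) * s t (a t))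
    (astar : Fin K) :
    (Finset.Icc 1 T).inf' (Finset.nonempty_Icc.mpr hT) (fun t => f astar - f (a t)) ≤
      Real.sqrt (((4 * β T / Real.log (1 + (σ ^ 2)⁻¹)) *
          ∑ t ∈ Finset.Icc 1 T, Real.log (1 + (σ ^ 2)⁻¹ * (s t (a t)) ^ 2)) /
        ∑ t ∈ Finset.Icc 1 T, c (a t)) := by
  rw [mul_sum]
  refine inf'_le_sqrt_sum_div_sum _ (fun t _ => hc (a t))
    (w := fun t => 2 * (sqrt (β t / c (a t)) * s t (a t)))
    (fun t ht => sub_le_two_mul_of_abs_sub_le (hconf t ht) (ha t ht astar)) (fun t ht => ?_)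
  have hβt : 0 ≤ β t := (hβpos t ht).le
  have hβT : 0 ≤ β T := hβt.trans (hβmono (mem_Icc.mp ht).2)
  obtain ⟨hs₀, hs₁⟩ := hs t ht (a t)
  calc c (a t) * (2 * (sqrt (β t / c (a t)) * s t (a t))) ^ 2
      = 4 * β t * s t (a t) ^ 2 := by
        rw [mul_pow, mul_left_comm, mul_sq_sqrt_div_mul hβt (hc (a t))]; ring
    _ ≤ 4 * β T * (log (1 + (σ ^ 2)⁻¹ * s t (a t) ^ 2) / log (1 + (σ ^ 2)⁻¹)) := by
        gcongr
        · exact hβmono (mem_Icc.mp ht).2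
        · exact sq_le_log_one_add_mul_sq_div (by positivity) hs₀ hs₁
    _ = _ := by ring

theorem cost_aware_gpucb_min_regret (T K : ℕ) (hT : 1 ≤ T) (hK : 1 ≤ K)
    (σ : ℝ) (hσ : 0 < σ)
    (f c : Fin K → ℝ) (hc : ∀ k, 0 < c k)
    (β : ℕ → ℝ) (hβpos : ∀ t ∈ Finset.Icc 1 T, 0 < β t) (hβmono : Monotone β)
    (μ s : ℕ → Fin K → ℝ)
    (hs : ∀ t ∈ Finset.Icc 1 T, ∀ k, 0 ≤ s t k ∧ s t k ≤ 1)
    (hconf : ∀ t ∈ Finset.Icc 1 T, ∀ k,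
      |f k - μ t k| ≤ Real.sqrt (β t / c k) * s t k)
    (a : ℕ → Fin K)
    (ha : ∀ t ∈ Finset.Icc 1 T, ∀ k,
      μ t k + Real.sqrt (β t / c k) * s t k ≤
        μ t (a t) + Real.sqrt (β t / c (a t)) * s t (a t))
    (astar : Fin K) (hastar : ∀ k, f k ≤ f astar) :
    (Finset.Icc 1 T).inf' (Finset.nonempty_Icc.mpr hT) (fun t => f astar - f (a t)) ≤
      Real.sqrt (((4 * β T / Real.log (1 + (σ ^ 2)⁻¹)) *
          ∑ t ∈ Finset.Icc 1 T, Real.log (1 + (σ ^ 2)⁻¹ * (s t (a t)) ^ 2)) /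
        ∑ t ∈ Finset.Icc 1 T, c (a t)) :=
  cost_aware_gpucb_min_regret_general T K hT σ hσ f c hc β hβpos hβmono μ s hs hconf a ha astar
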